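/- arXiv:2008.12392 — 3 statements merged into one kernel-verified Lean document; each statement's English description precedes it below -/
import Mathlib

section
/- Let c > 1 with c ∉ ℕ and let η > 0 be sufficiently small. There is a constant C > 0 (depending only on c and η) such that for all sufficiently large X the following holds: for any complex numbers (cₙ) with |cₙ| ≤ 1, let V(y) be either Σ_{X/8 < n ≤ X} cₙ e(n^c y) or Σ_{X/8 < n ≤ X} cₙ e(⌊n^c⌋ y). Then for every B with 0 < B < X^{2η}, one has ∫_B^{2B} |V(y)|² dy ≤ C·( X·B + X^{2−c}·log X ). -/
open Real MeasureTheory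

/-- `e θ = exp(2πiθ)`. -/
noncomputable def e (θ : ℝ) : ℂ := Complex.exp (2 * Real.pi * Complex.I * θ)

/-!
Write `V y = ∑ cₙ e(λₙ y)` and expand `|V|²`: after integrating over `[B, 2B]` the diagonal
contributes `B` per index and an off-diagonal pair at most `1 / (π |λₘ - λₙ|)`.
For `n > X/8` the frequencies `λₙ = nᶜ` satisfy `|λₘ - λₙ| ≥ c (X/8)^(c-1) |m - n|`
(Bernoulli's inequality), and taking integer parts costs at most `1`, i.e. at most half of
this gap once `X` is large. The off-diagonal terms therefore total
`≪ X^(1-c) ∑ₘ ∑_{n ≠ m} 1/|m - n| ≪ X^(2-c) log X`.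
-/

open Finset Filter ComplexConjugate

lemma norm_e (θ : ℝ) : ‖e θ‖ = 1 := by
  rw [e, show 2 * (π : ℂ) * Complex.I * θ = ((2 * π * θ : ℝ) : ℂ) * Complex.I by push_cast; ring]
  exact Complex.norm_exp_ofReal_mul_I _

lemma e_zero : e 0 = 1 := by simp [e]

lemma e_mul_conj_e (a b : ℝ) : e a * conj (e b) = e (a - b) := by
  rw [e, e, e, ← Complex.exp_conj, ← Complex.exp_add]
  congr 1
  simp only [map_mul, Complex.conj_I, Complex.conj_ofReal, map_ofNat]
  push_cast; ring

@[fun_prop]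
lemma continuous_e_mul (μ : ℝ) : Continuous fun y : ℝ => e (μ * y) := by
  unfold e; fun_prop

lemma norm_intervalIntegral_e_mul_le {μ : ℝ} (hμ : μ ≠ 0) (a b : ℝ) :
    ‖∫ y in a..b, e (μ * y)‖ ≤ (π * |μ|)⁻¹ := by
  set k : ℂ := 2 * π * Complex.I * μ
  have hk : k ≠ 0 := by simp [k, pi_ne_zero, hμ]
  have hk_norm : ‖k‖ = 2 * (π * |μ|) := by
    simp [k, Complex.norm_real, abs_of_pos pi_pos, mul_assoc]
  have he : ∀ y : ℝ, e (μ * y) = Complex.exp (k * y) := fun y => by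
    rw [e]; congr 1; push_cast; ring
  simp_rw [he]
  rw [integral_exp_mul_complex hk, norm_div, hk_norm, ← he, ← he]
  have h2 : ‖e (μ * b) - e (μ * a)‖ ≤ 2 :=
    (norm_sub_le _ _).trans_eq (by rw [norm_e, norm_e]; norm_num)
  calc _ ≤ 2 / (2 * (π * |μ|)) := by gcongr
    _ = (π * |μ|)⁻¹ := by field_simp

lemma mul_rpow_sub_one_mul_sub_le_rpow_sub_rpow {c x m n : ℝ} (hc : 1 ≤ c) (hx : 0 < x)
    (hxn : x ≤ n) (hnm : n ≤ m) : c * x ^ (c - 1) * (m - n) ≤ m ^ c - n ^ c := by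
  have hn : 0 < n := hx.trans_le hxn
  have hbernoulli : 1 + c * (m / n - 1) ≤ (m / n) ^ c := by
    have h := one_add_mul_self_le_rpow_one_add (s := m / n - 1)
      (by linarith [(one_le_div hn).2 hnm]) hc
    rwa [add_sub_cancel] at h
  have hscaled : n ^ c + c * n ^ (c - 1) * (m - n) ≤ m ^ c := by
    have h := mul_le_mul_of_nonneg_left hbernoulli (rpow_nonneg hn.le c)
    rw [← mul_rpow hn.le (div_nonneg (hn.le.trans hnm) hn.le), mul_div_cancel₀ _ hn.ne'] at h
    calc n ^ c + c * n ^ (c - 1) * (m - n) = n ^ c * (1 + c * (m / n - 1)) := by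
          rw [rpow_sub_one hn.ne']; field_simp
      _ ≤ m ^ c := h
  have hpow : x ^ (c - 1) ≤ n ^ (c - 1) := rpow_le_rpow hx.le hxn (by linarith)
  nlinarith [mul_le_mul_of_nonneg_right hpow (sub_nonneg.2 hnm)]

lemma sum_inv_abs_sub_le_harmonic {T : Finset ℕ} {m N : ℕ}
    (hinj : Set.InjOn (fun n : ℕ => ((m : ℤ) - n).natAbs) T)
    (hT : ∀ n ∈ T, n ≠ m ∧ ((m : ℤ) - n).natAbs ≤ N) :
    ∑ n ∈ T, |(m : ℝ) - n|⁻¹ ≤ harmonic N := by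
  have hcast : ∀ n : ℕ, |(m : ℝ) - n| = (((m : ℤ) - n).natAbs : ℝ) := fun n => by
    rw [Nat.cast_natAbs]; push_cast; rfl
  simp_rw [hcast]
  rw [← sum_image (f := fun k : ℕ => (k : ℝ)⁻¹) hinj, harmonic_eq_sum_Icc]
  push_cast
  refine sum_le_sum_of_subset_of_nonneg ?_ fun _ _ _ => by positivity
  intro k hk
  obtain ⟨n, hn, rfl⟩ := mem_image.1 hk
  have := hT n hn
  rw [mem_Icc]
  omega

lemma sum_erase_inv_abs_sub_le {a b m : ℕ} (hm : m ∈ Ioc a b) :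
    ∑ n ∈ (Ioc a b).erase m, |(m : ℝ) - n|⁻¹ ≤ 2 * (1 + log (b - a : ℕ)) := by
  rw [mem_Ioc] at hm
  have hT : ∀ n ∈ (Ioc a b).erase m, n ≠ m ∧ ((m : ℤ) - n).natAbs ≤ b - a := fun n hn => by
    rw [mem_erase, mem_Ioc] at hn
    omega
  rw [← sum_filter_add_sum_filter_not _ (· < m)]
  have hbelow := sum_inv_abs_sub_le_harmonic (T := {n ∈ (Ioc a b).erase m | n < m})
    (fun x hx y hy hxy => by simp only [coe_filter, Set.mem_ofPred_eq] at hx hy hxy; omega)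
    (fun n hn => hT n (mem_filter.1 hn).1)
  have habove := sum_inv_abs_sub_le_harmonic (T := {n ∈ (Ioc a b).erase m | ¬n < m})
    (fun x hx y hy hxy => by
      simp only [coe_filter, Set.mem_ofPred_eq, mem_erase] at hx hy hxy; omega)
    (fun n hn => hT n (mem_filter.1 hn).1)
  linarith [harmonic_le_one_add_log (b - a)]

def WellSpaced (S : Finset ℕ) (lam : ℕ → ℝ) (D : ℝ) : Prop :=
  ∀ m ∈ S, ∀ n ∈ S, m ≠ n → D * |(m : ℝ) - n| ≤ |lam m - lam n|

namespace WellSpaced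

variable {S : Finset ℕ} {lam : ℕ → ℝ} {D : ℝ}

lemma of_lt (h : ∀ m ∈ S, ∀ n ∈ S, n < m → D * ((m : ℝ) - n) ≤ lam m - lam n) :
    WellSpaced S lam D := by
  intro m hm n hn hmn
  wlog hlt : n < m generalizing m n
  · rw [abs_sub_comm, abs_sub_comm (lam m)]
    exact this n hn m hm hmn.symm (by omega)
  rw [abs_of_pos (sub_pos.2 (Nat.cast_lt.2 hlt))]
  exact (h m hm n hn hlt).trans (le_abs_self _)

lemma mono {D' : ℝ} (h : WellSpaced S lam D) (hD : D' ≤ D) : WellSpaced S lam D' :=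
  fun m hm n hn hmn => (mul_le_mul_of_nonneg_right hD (abs_nonneg _)).trans (h m hm n hn hmn)

lemma floor (h : WellSpaced S lam (2 * D)) (hD : 1 ≤ D) :
    WellSpaced S (fun n => (⌊lam n⌋ : ℝ)) D := by
  intro m hm n hn hmn
  have hdist : 1 ≤ |(m : ℝ) - n| := by
    have : (1 : ℤ) ≤ |(m : ℤ) - n| := Int.one_le_abs (sub_ne_zero.2 (by exact_mod_cast hmn))
    exact_mod_cast this
  have hfloor : |(lam m - lam n) - ((⌊lam m⌋ : ℝ) - ⌊lam n⌋)| ≤ 1 := by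
    have := Int.fract_nonneg (lam m); have := Int.fract_lt_one (lam m)
    have := Int.fract_nonneg (lam n); have := Int.fract_lt_one (lam n)
    unfold Int.fract at *
    rw [abs_le]; constructor <;> linarith
  have := h m hm n hn hmn
  have := abs_sub_abs_le_abs_sub (lam m - lam n) ((⌊lam m⌋ : ℝ) - ⌊lam n⌋)
  nlinarith

end WellSpaced

section ExpSum

variable (S : Finset ℕ) (cf : ℕ → ℂ) (lam : ℕ → ℝ)

lemma integral_norm_sq_expSum (a b : ℝ) :
    ∫ y in a..b, ‖∑ n ∈ S, cf n * e (lam n * y)‖ ^ 2 =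
      (∑ m ∈ S, ∑ n ∈ S, cf m * conj (cf n) * ∫ y in a..b, e ((lam m - lam n) * y)).re := by
  have hexpand : ∀ y : ℝ, ((‖∑ n ∈ S, cf n * e (lam n * y)‖ ^ 2 : ℝ) : ℂ) =
      ∑ m ∈ S, ∑ n ∈ S, cf m * conj (cf n) * e ((lam m - lam n) * y) := fun y => by
    rw [Complex.ofReal_pow, ← Complex.mul_conj', map_sum, sum_mul_sum]
    refine sum_congr rfl fun m _ => sum_congr rfl fun n _ => ?_
    rw [map_mul, mul_mul_mul_comm, e_mul_conj_e, sub_mul]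
  rw [← Complex.ofReal_re (∫ y in a..b, _), ← intervalIntegral.integral_ofReal]
  simp_rw [hexpand]
  rw [intervalIntegral.integral_finsetSum fun m _ => by
    apply Continuous.intervalIntegrable; fun_prop]
  refine congrArg _ (sum_congr rfl fun m _ => ?_)
  rw [intervalIntegral.integral_finsetSum fun n _ => by
    apply Continuous.intervalIntegrable; fun_prop]
  exact sum_congr rfl fun n _ => intervalIntegral.integral_const_mul _ _

lemma integral_norm_sq_expSum_le {a b D : ℝ} (hab : a ≤ b) (hD : 0 < D)
    (hcf : ∀ n ∈ S, ‖cf n‖ ≤ 1) (hsep : WellSpaced S lam D) :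
    ∫ y in a..b, ‖∑ n ∈ S, cf n * e (lam n * y)‖ ^ 2 ≤
      #S * (b - a) + (π * D)⁻¹ * ∑ m ∈ S, ∑ n ∈ S.erase m, |(m : ℝ) - n|⁻¹ := by
  set I : ℕ → ℕ → ℂ := fun m n => ∫ y in a..b, e ((lam m - lam n) * y)
  have hcoeff : ∀ m ∈ S, ∀ n ∈ S, ‖cf m * conj (cf n) * I m n‖ ≤ ‖I m n‖ := by
    intro m hm n hn
    rw [norm_mul, norm_mul, Complex.norm_conj]
    exact mul_le_of_le_one_left (norm_nonneg _) (mul_le_one₀ (hcf m hm) (norm_nonneg _) (hcf n hn))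
  have hdiag : ∀ m, ‖I m m‖ = b - a := fun m => by
    simp [I, e_zero, -Complex.ofReal_sub, abs_of_nonneg (sub_nonneg.2 hab)]
  have hoff : ∀ m ∈ S, ∀ n ∈ S.erase m, ‖I m n‖ ≤ (π * D)⁻¹ * |(m : ℝ) - n|⁻¹ := by
    intro m hm n hn
    obtain ⟨hnm, hn⟩ := mem_erase.1 hn
    have hdist : 0 < |(m : ℝ) - n| := abs_pos.2 (sub_ne_zero.2 (by exact_mod_cast hnm.symm))
    have hsep' := hsep m hm n hn hnm.symm
    have hlam : 0 < |lam m - lam n| := (mul_pos hD hdist).trans_le hsep'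
    calc ‖I m n‖ ≤ (π * |lam m - lam n|)⁻¹ := norm_intervalIntegral_e_mul_le (abs_pos.1 hlam) a b
      _ ≤ (π * (D * |(m : ℝ) - n|))⁻¹ := by gcongr
      _ = (π * D)⁻¹ * |(m : ℝ) - n|⁻¹ := by rw [← mul_assoc, mul_inv]
  rw [integral_norm_sq_expSum]
  calc _ ≤ ‖∑ m ∈ S, ∑ n ∈ S, cf m * conj (cf n) * I m n‖ := Complex.re_le_norm _
    _ ≤ ∑ m ∈ S, ∑ n ∈ S, ‖I m n‖ := (norm_sum_le _ _).trans <| sum_le_sum fun m hm =>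
          (norm_sum_le _ _).trans <| sum_le_sum fun n hn => hcoeff m hm n hn
    _ = ∑ m ∈ S, ((b - a) + ∑ n ∈ S.erase m, ‖I m n‖) :=
          sum_congr rfl fun m hm => by rw [← add_sum_erase _ _ hm, hdiag]
    _ ≤ ∑ m ∈ S, ((b - a) + (π * D)⁻¹ * ∑ n ∈ S.erase m, |(m : ℝ) - n|⁻¹) := by
          gcongr with m hm
          rw [mul_sum]
          exact sum_le_sum (hoff m hm)
    _ = _ := by rw [sum_add_distrib, sum_const, nsmul_eq_mul, mul_sum]

end ExpSum

lemma integral_norm_sq_expSum_Ioc_le {a b : ℕ} {cf : ℕ → ℂ} {lam : ℕ → ℝ} {X B D : ℝ}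
    (hB : 0 < B) (hD : 0 < D) (hbX : (b : ℝ) ≤ X) (hX : exp 1 ≤ X)
    (hcf : ∀ n ∈ Ioc a b, ‖cf n‖ ≤ 1) (hsep : WellSpaced (Ioc a b) lam D) :
    ∫ y in B..2 * B, ‖∑ n ∈ Ioc a b, cf n * e (lam n * y)‖ ^ 2 ≤
      X * B + 4 * X * log X / (π * D) := by
  have hX0 : 0 < X := (exp_pos 1).trans_le hX
  have hlogX : 1 ≤ log X := by rwa [le_log_iff_exp_le hX0]
  have hlength : ((b - a : ℕ) : ℝ) ≤ X := (Nat.cast_le.2 (Nat.sub_le b a)).trans hbX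
  have hlog : log (b - a : ℕ) ≤ log X := by
    rcases Nat.eq_zero_or_pos (b - a) with h | h
    · rw [h, Nat.cast_zero, log_zero]; linarith
    · exact log_le_log (by exact_mod_cast h) hlength
  have hrows : ∑ m ∈ Ioc a b, ∑ n ∈ (Ioc a b).erase m, |(m : ℝ) - n|⁻¹ ≤ X * (4 * log X) :=
    calc _ ≤ ∑ m ∈ Ioc a b, 2 * (1 + log (b - a : ℕ)) :=
          sum_le_sum fun m hm => sum_erase_inv_abs_sub_le hm
      _ = (b - a : ℕ) * (2 * (1 + log (b - a : ℕ))) := by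
          rw [sum_const, nsmul_eq_mul, Nat.card_Ioc]
      _ ≤ X * (4 * log X) :=
          mul_le_mul hlength (by linarith) (by linarith [log_natCast_nonneg (b - a)]) hX0.le
  have hL2 := integral_norm_sq_expSum_le _ cf lam (by linarith : B ≤ 2 * B) hD hcf hsep
  rw [Nat.card_Ioc, show 2 * B - B = B by ring] at hL2
  calc _ ≤ _ := hL2
    _ ≤ X * B + (π * D)⁻¹ * (X * (4 * log X)) := by gcongr
    _ = X * B + 4 * X * log X / (π * D) := by ring

lemma wellSpaced_rpow_Ioc {c x : ℝ} (hc : 1 ≤ c) (hx : 0 < x) (b : ℕ) :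
    WellSpaced (Ioc ⌊x⌋₊ b) (fun n => (n : ℝ) ^ c) (c * x ^ (c - 1)) :=
  WellSpaced.of_lt fun _ _ n hn hnm => mul_rpow_sub_one_mul_sub_le_rpow_sub_rpow hc hx
    (Nat.lt_of_floor_lt (mem_Ioc.1 hn).1).le (by exact_mod_cast hnm.le)

lemma eventually_two_le_mul_rpow_div {c : ℝ} (hc : 1 < c) (r : ℝ) (hr : 0 < r) :
    ∀ᶠ X : ℝ in atTop, 2 ≤ c * (X / r) ^ (c - 1) :=
  (((tendsto_rpow_atTop (by linarith)).comp (tendsto_id.atTop_div_const hr)).const_mul_atTop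
    (by linarith)).eventually_ge_atTop 2

lemma div_pi_mul_half_mul_rpow_eq {X : ℝ} (hX : 0 < X) (c : ℝ) :
    4 * X * log X / (π * (c * (X / 8) ^ (c - 1) / 2)) =
      8 ^ c / (π * c) * (X ^ (2 - c) * log X) := by
  rw [div_rpow hX.le (by norm_num), rpow_sub_one (by norm_num : (8 : ℝ) ≠ 0),
    rpow_sub_one hX.ne', rpow_sub hX, rpow_two]
  field_simp
  ring

theorem lemma12i_general (c : ℝ) (hc : 1 < c) :
    ∃ η₀ > 0, ∀ η : ℝ, 0 < η → η ≤ η₀ →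
    ∃ C > 0, ∃ X₀ : ℝ, ∀ X : ℝ, X₀ ≤ X →
    ∀ cf : ℕ → ℂ, (∀ n, ‖cf n‖ ≤ 1) →
    ∀ V : ℝ → ℂ,
      ((V = fun y => ∑ n ∈ Finset.Ioc ⌊X/8⌋₊ ⌊X⌋₊, cf n * e ((n : ℝ) ^ c * y)) ∨
       (V = fun y => ∑ n ∈ Finset.Ioc ⌊X/8⌋₊ ⌊X⌋₊, cf n * e ((⌊(n : ℝ) ^ c⌋ : ℝ) * y))) →
    ∀ B : ℝ, 0 < B → B < X ^ (2 * η) →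
    (∫ y in B..(2 * B), ‖V y‖ ^ 2) ≤ C * (X * B + X ^ (2 - c) * Real.log X) := by
  refine ⟨1, one_pos, fun η _ _ => ⟨1 + 8 ^ c / (π * c), by positivity, ?_⟩⟩
  obtain ⟨X₀, hX₀⟩ := eventually_atTop.1 <|
    (eventually_ge_atTop (exp 1)).and (eventually_two_le_mul_rpow_div hc 8 (by norm_num))
  refine ⟨X₀, fun X hX cf hcf V hV B hB _ => ?_⟩
  obtain ⟨hXe, hK⟩ := hX₀ X hX
  have hX : 0 < X := (exp_pos 1).trans_le hXe
  set D := c * (X / 8) ^ (c - 1) / 2 with hD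
  have hsep : WellSpaced (Ioc ⌊X / 8⌋₊ ⌊X⌋₊) (fun n => (n : ℝ) ^ c) (2 * D) := by
    simpa only [D, mul_div_cancel₀ _ (two_ne_zero (α := ℝ))] using
      wellSpaced_rpow_Ioc hc.le (by positivity : 0 < X / 8) ⌊X⌋₊
  obtain ⟨lam, rfl, hlam⟩ : ∃ lam : ℕ → ℝ,
      V = (fun y => ∑ n ∈ Ioc ⌊X / 8⌋₊ ⌊X⌋₊, cf n * e (lam n * y)) ∧
      WellSpaced (Ioc ⌊X / 8⌋₊ ⌊X⌋₊) lam D := by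
    rcases hV with rfl | rfl
    exacts [⟨_, rfl, hsep.mono (by linarith)⟩, ⟨_, rfl, hsep.floor (by linarith)⟩]
  have hXB : 0 ≤ 8 ^ c / (π * c) * (X * B) := by positivity
  have hlog : 0 ≤ X ^ (2 - c) * log X :=
    mul_nonneg (by positivity) (log_nonneg ((one_le_exp zero_le_one).trans hXe))
  calc _ ≤ X * B + 4 * X * log X / (π * D) :=
        integral_norm_sq_expSum_Ioc_le hB (by positivity) (Nat.floor_le hX.le) hXe
          (fun n _ => hcf n) hlam
    _ ≤ (1 + 8 ^ c / (π * c)) * (X * B + X ^ (2 - c) * log X) := by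
        rw [hD, div_pi_mul_half_mul_rpow_eq hX]
        nlinarith

theorem lemma12i (c : ℝ) (hc : 1 < c) (hcn : ∀ n : ℕ, c ≠ n) :
    ∃ η₀ > 0, ∀ η : ℝ, 0 < η → η ≤ η₀ →
    ∃ C > 0, ∃ X₀ : ℝ, ∀ X : ℝ, X₀ ≤ X →
    ∀ cf : ℕ → ℂ, (∀ n, ‖cf n‖ ≤ 1) →
    ∀ V : ℝ → ℂ,
      ((V = fun y => ∑ n ∈ Finset.Ioc ⌊X/8⌋₊ ⌊X⌋₊, cf n * e ((n : ℝ) ^ c * y)) ∨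
       (V = fun y => ∑ n ∈ Finset.Ioc ⌊X/8⌋₊ ⌊X⌋₊, cf n * e ((⌊(n : ℝ) ^ c⌋ : ℝ) * y))) →
    ∀ B : ℝ, 0 < B → B < X ^ (2 * η) →
    (∫ y in B..(2 * B), ‖V y‖ ^ 2) ≤ C * (X * B + X ^ (2 - c) * Real.log X) :=
  lemma12i_general c hc
end

section
/- Let c > 1 and let s be an integer with 2 ≤ s ≤ 5. Define v(Y, x) = Σ_{1 ≤ m ≤ Y} (1/c)·m^{1/c − 1}·e(xm) for Y > 0 and real x. Then there exist constants c₀ > 0 and r₀ such that for every integer r ≥ r₀, setting X = r^{1/c}, the quantity Lₛ = ∫_{−1/2}^{1/2} ( v(X^c, x) − v((X/8)^c, x) )^s · e(−rx) dx is a real number satisfying Lₛ ≥ c₀ · r^{s/c − 1}. -/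
/-!
Expanding the `s`-th power and integrating against `e (-r x)` over a period, orthogonality of the
characters leaves `∑ ∏ᵢ w(mᵢ)` over the representations `r = m₁ + ⋯ + mₛ` with every `mᵢ` in
`(⌊(X/8)^c⌋, r]`, where `w(m) = m^{1/c-1}/c`. This is a sum of nonnegative reals, so the integral is
real, and it is at least the number of such representations times `w(r)`ˢ. Letting
`m₁, …, m_{s-1}` range over `(r/8, r/8 + r/100]` and solving for `mₛ` gives `(r/100)^{s-1}`
representations, since `s ≤ 5` keeps `mₛ > r/8`.
-/

open Real

noncomputable def vsum (c Y x : ℝ) : ℂ :=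
  ∑ m ∈ Finset.Icc 1 ⌊Y⌋₊, (((1/c) * (m : ℝ) ^ (1/c - 1) : ℝ) : ℂ) * e (x * m)

open Finset

lemma e_add (a b : ℝ) : e (a + b) = e a * e b := by
  simp only [e, ← Complex.exp_add]; push_cast; ring_nf

@[fun_prop]
lemma continuous_e : Continuous e := by
  unfold e; fun_prop

lemma e_sum {ι : Type*} (t : Finset ι) (f : ι → ℝ) : e (∑ i ∈ t, f i) = ∏ i ∈ t, e (f i) := by
  simp only [e, ← Complex.exp_sum]; push_cast; rw [mul_sum]

lemma integral_e_intCast_mul (k : ℤ) :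
    ∫ x in (-(1:ℝ)/2)..((1:ℝ)/2), e (k * x) = if k = 0 then 1 else 0 := by
  split_ifs with hk
  · norm_num [hk, e]
  have hk' : 2 * π * Complex.I * k ≠ 0 := by simp [Real.pi_ne_zero, hk]
  have he : ∀ x : ℝ, e (k * x) = Complex.exp (2 * π * Complex.I * k * x) := fun x => by
    simp only [e]; push_cast; ring_nf
  simp only [he, integral_exp_mul_complex hk', div_eq_zero_iff, hk', or_false, sub_eq_zero]
  -- the endpoints differ by one full period
  have hperiod : 2 * π * Complex.I * k * ((1/2 : ℝ) : ℂ)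
      = 2 * π * Complex.I * k * ((-1/2 : ℝ) : ℂ) + k * (2 * π * Complex.I) := by
    push_cast; ring
  rw [hperiod, Complex.exp_add, Complex.exp_int_mul_two_pi_mul_I, mul_one]

lemma integral_sum_pow_mul_e (w : ℕ → ℂ) (S : Finset ℕ) (s r : ℕ) :
    ∫ x in (-(1:ℝ)/2)..((1:ℝ)/2), (∑ m ∈ S, w m * e (x * m)) ^ s * e (-(r:ℝ) * x)
      = ∑ p ∈ Fintype.piFinset (fun _ : Fin s => S) with ∑ i, p i = r, ∏ i, w (p i) := by
  have hexpand : ∀ x : ℝ, (∑ m ∈ S, w m * e (x * m)) ^ s * e (-(r:ℝ) * x)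
      = ∑ p ∈ Fintype.piFinset (fun _ : Fin s => S),
          (∏ i, w (p i)) * e (((∑ i, p i : ℕ) - r : ℤ) * x) := by
    intro x
    rw [← Fin.prod_const, prod_univ_sum, sum_mul]
    refine sum_congr rfl fun p _ => ?_
    rw [prod_mul_distrib, ← e_sum, mul_assoc, ← e_add]
    congr 2
    push_cast
    simp only [sub_mul, sum_mul, mul_comm x]
    ring
  rw [intervalIntegral.integral_congr fun x _ => hexpand x,
    intervalIntegral.integral_finsetSum fun p _ => by
      apply Continuous.intervalIntegrable; fun_prop,
    sum_filter]
  refine sum_congr rfl fun p _ => ?_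
  rw [intervalIntegral.integral_const_mul, integral_e_intCast_mul]
  simp only [mul_ite, mul_one, mul_zero, sub_eq_zero, Nat.cast_inj]

lemma pow_le_card_filter_sum_eq {n q t A r : ℕ} (hAq : A ≤ q) (hr : n * (q + t) + A < r) :
    t ^ n ≤ #{p ∈ Fintype.piFinset (fun _ : Fin (n + 1) => Ioc A r) | ∑ i, p i = r} := by
  have hcard : #(Fintype.piFinset fun _ : Fin n => Icc (q + 1) (q + t)) = t ^ n := by
    simp [Fintype.card_piFinset]
  rw [← hcard]
  -- the first `n` coordinates range freely over `(q, q + t]`, the last one is fixed by the sum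
  refine card_le_card_of_injOn (fun g => Fin.snoc g (r - ∑ j, g j)) (fun g hg => ?_)
    (fun g _ g' _ h => funext fun j => by simpa using congrFun h j.castSucc)
  simp only [mem_coe, Fintype.mem_piFinset, mem_Icc] at hg
  have hsum : ∑ j, g j ≤ n * (q + t) := by
    calc ∑ j, g j ≤ ∑ _j : Fin n, (q + t) := sum_le_sum fun j _ => (hg j).2
    _ = n * (q + t) := by simp
  simp only [Fin.sum_univ_castSucc, coe_filter, Fintype.mem_piFinset, mem_Ioc, Set.mem_ofPred_eq,
    Fin.snoc_castSucc, Fin.snoc_last]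
  refine ⟨fun i => ?_, by omega⟩
  cases i using Fin.lastCases with
  | last => simp only [Fin.snoc_last]; omega
  | cast j =>
    have := single_le_sum (fun j _ => Nat.zero_le (g j)) (mem_univ j)
    simp only [Fin.snoc_castSucc]; have := hg j; omega

lemma card_mul_pow_le_sum_prod {ι α : Type*} [Fintype ι] (T : Finset (ι → α)) {w : α → ℝ} {δ : ℝ}
    (hδ : 0 ≤ δ) (hw : ∀ p ∈ T, ∀ i, δ ≤ w (p i)) :
    #T * δ ^ Fintype.card ι ≤ ∑ p ∈ T, ∏ i, w (p i) := by
  rw [← nsmul_eq_mul]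
  refine card_nsmul_le_sum _ _ _ fun p hp => ?_
  calc δ ^ Fintype.card ι = ∏ _i : ι, δ := (prod_const _).symm
  _ ≤ ∏ i, w (p i) := prod_le_prod (fun _ _ => hδ) fun i _ => hw p hp i

noncomputable def vweight (c : ℝ) (m : ℕ) : ℝ := 1 / c * (m : ℝ) ^ (1 / c - 1)

lemma vweight_nonneg {c : ℝ} (hc : 0 ≤ c) (m : ℕ) : 0 ≤ vweight c m := by
  unfold vweight; positivity

lemma vweight_le_vweight {c : ℝ} (hc : 1 ≤ c) {m n : ℕ} (hm : 1 ≤ m) (hmn : m ≤ n) :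
    vweight c n ≤ vweight c m := by
  have hexp : 1 / c - 1 ≤ 0 := by
    rw [sub_nonpos, div_le_one (by linarith)]; exact hc
  exact mul_le_mul_of_nonneg_left
    (rpow_le_rpow_of_nonpos (by exact_mod_cast hm) (by exact_mod_cast hmn) hexp) (by positivity)

lemma vsum_sub_vsum {c Y Y' : ℝ} (x : ℝ) (h : ⌊Y'⌋₊ ≤ ⌊Y⌋₊) :
    vsum c Y x - vsum c Y' x = ∑ m ∈ Ioc ⌊Y'⌋₊ ⌊Y⌋₊, (vweight c m : ℂ) * e (x * m) := by
  rw [sub_eq_iff_eq_add', vsum, vsum, ← zero_add 1, Icc_add_one_left_eq_Ioc]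
  exact (sum_Ioc_consecutive _ (Nat.zero_le _) h).symm

lemma rpow_le_sum_prod_vweight {c : ℝ} (hc : 1 < c) {n r A : ℕ} (hn : n ≤ 4) (hr : 100 ≤ r)
    (hA : A ≤ r / 8) :
    (1 / 200) ^ n * (1 / c) ^ (n + 1) * (r : ℝ) ^ (((n + 1 : ℕ) : ℝ) / c - 1) ≤
      ∑ p ∈ Fintype.piFinset (fun _ : Fin (n + 1) => Ioc A r) with ∑ i, p i = r,
        ∏ i, vweight c (p i) := by
  set T := {p ∈ Fintype.piFinset (fun _ : Fin (n + 1) => Ioc A r) | ∑ i, p i = r}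
  have hrpos : (0 : ℝ) < r := by positivity
  have hw0 : 0 ≤ vweight c r := vweight_nonneg (by linarith) r
  have hcount : (r / 100) ^ n ≤ #T := by
    refine pow_le_card_filter_sum_eq (q := r / 8) hA ?_
    have : n * (r / 8 + r / 100) ≤ 4 * (r / 8 + r / 100) := Nat.mul_le_mul_right _ hn
    omega
  have hweight : ∀ p ∈ T, ∀ i, vweight c r ≤ vweight c (p i) := fun p hp i => by
    have := (Fintype.mem_piFinset.mp (mem_filter.mp hp).1) i
    rw [mem_Ioc] at this
    exact vweight_le_vweight hc.le (by omega) this.2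
  have hr100 : (r : ℝ) / 200 ≤ ((r / 100 : ℕ) : ℝ) := by
    rw [div_le_iff₀ (by norm_num)]; exact_mod_cast (by omega : r ≤ (r / 100) * 200)
  calc (1 / 200) ^ n * (1 / c) ^ (n + 1) * (r : ℝ) ^ (((n + 1 : ℕ) : ℝ) / c - 1)
      = ((r : ℝ) / 200) ^ n * vweight c r ^ (n + 1) := by
        have hexp : (r : ℝ) ^ (((n + 1 : ℕ) : ℝ) / c - 1)
            = (r : ℝ) ^ n * ((r : ℝ) ^ (1 / c - 1)) ^ (n + 1) := by
          rw [← rpow_natCast _ n, ← rpow_natCast _ (n + 1), ← rpow_mul hrpos.le, ← rpow_add hrpos]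
          congr 1
          push_cast
          ring
        simp only [hexp, vweight, div_pow, mul_pow, one_pow]
        ring
    _ ≤ ((r / 100 : ℕ) : ℝ) ^ n * vweight c r ^ (n + 1) := by
        gcongr
    _ ≤ #T * vweight c r ^ (n + 1) := by
        gcongr
        exact_mod_cast hcount
    _ ≤ ∑ p ∈ T, ∏ i, vweight c (p i) := by
        simpa using card_mul_pow_le_sum_prod T hw0 hweight

lemma floor_rpow_one_div_rpow {c : ℝ} (hc : c ≠ 0) (r : ℕ) : ⌊((r : ℝ) ^ (1 / c)) ^ c⌋₊ = r := by
  rw [one_div, rpow_inv_rpow r.cast_nonneg hc, Nat.floor_natCast]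

lemma floor_rpow_one_div_div_eight_rpow_le {c : ℝ} (hc : 1 ≤ c) (r : ℕ) :
    ⌊((r : ℝ) ^ (1 / c) / 8) ^ c⌋₊ ≤ r / 8 := by
  have h8 : (8 : ℝ) ≤ 8 ^ c := by
    simpa using rpow_le_rpow_of_exponent_le (by norm_num : (1 : ℝ) ≤ 8) hc
  rw [div_rpow (by positivity) (by norm_num), one_div, rpow_inv_rpow r.cast_nonneg (by linarith),
    ← Nat.floor_div_eq_div (K := ℝ)]
  exact Nat.floor_mono (div_le_div_of_nonneg_left r.cast_nonneg (by norm_num) h8)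

theorem lemma20 (c : ℝ) (hc : 1 < c) (s : ℕ) (hs2 : 2 ≤ s) (hs5 : s ≤ 5) :
    ∃ c₀ > 0, ∃ r₀ : ℕ, ∀ r : ℕ, r₀ ≤ r →
    (∫ x in (-(1:ℝ)/2)..((1:ℝ)/2),
        (vsum c (((r : ℝ) ^ (1/c)) ^ c) x - vsum c ((((r : ℝ) ^ (1/c)) / 8) ^ c) x) ^ s
          * e (-(r : ℝ) * x)).im = 0 ∧
    c₀ * (r : ℝ) ^ ((s : ℝ)/c - 1) ≤
      (∫ x in (-(1:ℝ)/2)..((1:ℝ)/2),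
        (vsum c (((r : ℝ) ^ (1/c)) ^ c) x - vsum c ((((r : ℝ) ^ (1/c)) / 8) ^ c) x) ^ s
          * e (-(r : ℝ) * x)).re := by
  obtain ⟨n, rfl⟩ : ∃ n, s = n + 1 := ⟨s - 1, by omega⟩
  refine ⟨(1 / 200) ^ n * (1 / c) ^ (n + 1), by positivity, 100, fun r hr => ?_⟩
  have hA := floor_rpow_one_div_div_eight_rpow_le hc.le r
  have hX : ⌊((r : ℝ) ^ (1 / c)) ^ c⌋₊ = r := floor_rpow_one_div_rpow (by linarith) r
  have hdiff : ∀ x, vsum c (((r : ℝ) ^ (1/c)) ^ c) x - vsum c ((((r : ℝ) ^ (1/c)) / 8) ^ c) x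
      = ∑ m ∈ Ioc ⌊((r : ℝ) ^ (1 / c) / 8) ^ c⌋₊ r, (vweight c m : ℂ) * e (x * m) := fun x => by
    rw [vsum_sub_vsum x (by omega), hX]
  simp only [hdiff, integral_sum_pow_mul_e, ← Complex.ofReal_prod, ← Complex.ofReal_sum,
    Complex.ofReal_im, Complex.ofReal_re, true_and]
  exact rpow_le_sum_prod_vweight hc (by omega) hr hA
end

section
/- Let c > 1, let η > 0, and let s be an integer with 2 ≤ s ≤ 5. Then there exist constants c₀ > 0 and R₀ such that for every R ≥ R₀ the following holds, with X = R^{1/c}: for every continuous function φ : ℝ → [0,1] with φ(y) = 1 whenever |y| ≤ (4/5)·R^{−η}, the quantity Hₛ = ∫_{X/8}^{X} ⋯ ∫_{X/8}^{X} φ(t₁^c + ⋯ + tₛ^c − R) dt₁ ⋯ dtₛ satisfies Hₛ ≥ c₀ · X^{s − c − cη}. -/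
/-!
Write `X = R ^ (1 / c)`, so that `R = X ^ c`. For `y` in the box `[X/8, X/7] ^ (s - 1)` we have
`∑ y_j ^ c ≤ 4 X ^ c / 7` because `s ≤ 5`, so `t₀ ^ c + ∑ y_j ^ c = X ^ c` has a root
`t₀ = u(y) ∈ [3X/7, X]`. On the slab `u(y) - δ < t₀ < u(y)` the mean value theorem gives
`|t₀ ^ c + ∑ y_j ^ c - R| ≤ c X ^ (c - 1) δ`, which is `R ^ (-η) / 4` for
`δ = X ^ (1 - c - cη) / (4c)`. So `φ = 1` on the slab, whose volume is
`δ (X/56) ^ (s - 1) ≍ X ^ (s - c - cη)`.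
-/

open Real MeasureTheory Set

theorem rpow_sub_rpow_le_mul_sub {a b c : ℝ} (ha : 0 ≤ a) (hab : a ≤ b) (hc : 1 ≤ c) :
    b ^ c - a ^ c ≤ c * b ^ (c - 1) * (b - a) := by
  rcases hab.eq_or_lt with rfl | hlt
  · simp
  have hslope := (convexOn_rpow hc).slope_le_of_hasDerivAt (mem_Ici.2 ha)
    (mem_Ici.2 (ha.trans hlt.le)) hlt (hasDerivAt_rpow_const (Or.inr hc))
  rwa [slope_def_field, div_le_iff₀ (sub_pos.2 hlt)] at hslope

theorem abs_rpow_sub_rpow_le {a b c X δ : ℝ} (ha : 0 ≤ a) (hab : a ≤ b) (hbX : b ≤ X)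
    (hδ : b - a ≤ δ) (hc : 1 ≤ c) : |a ^ c - b ^ c| ≤ c * X ^ (c - 1) * δ := by
  rw [abs_sub_comm, abs_of_nonneg (sub_nonneg.2 (rpow_le_rpow ha hab (by linarith)))]
  calc b ^ c - a ^ c ≤ c * b ^ (c - 1) * (b - a) := rpow_sub_rpow_le_mul_sub ha hab hc
    _ ≤ c * X ^ (c - 1) * δ :=
      mul_le_mul
        (mul_le_mul_of_nonneg_left (rpow_le_rpow (ha.trans hab) hbX (by linarith)) (by linarith))
        hδ (sub_nonneg.2 hab) (mul_nonneg (by linarith) (rpow_nonneg (by linarith) _))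

theorem sum_rpow_le_of_mem_Icc {m : ℕ} (hm : m ≤ 4) {c X : ℝ} (hc : 1 ≤ c) (hX : 0 ≤ X)
    {y : Fin m → ℝ} (hy : ∀ j, y j ∈ Icc 0 (X / 7)) : ∑ j, y j ^ c ≤ 4 / 7 * X ^ c := by
  have h7 : (7 : ℝ) ≤ 7 ^ c := by
    simpa using rpow_le_rpow_of_exponent_le (by norm_num : (1 : ℝ) ≤ 7) hc
  have hterm : ∀ j, y j ^ c ≤ X ^ c / 7 := fun j => calc
    y j ^ c ≤ (X / 7) ^ c := rpow_le_rpow (hy j).1 (hy j).2 (by linarith)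
    _ = X ^ c / 7 ^ c := div_rpow hX (by norm_num) c
    _ ≤ X ^ c / 7 := div_le_div_of_nonneg_left (by positivity) (by norm_num) h7
  calc ∑ j, y j ^ c ≤ m * (X ^ c / 7) := by
        simpa using Finset.sum_le_sum fun j (_ : j ∈ Finset.univ) => hterm j
    _ ≤ 4 * (X ^ c / 7) := by gcongr; exact_mod_cast hm
    _ = 4 / 7 * X ^ c := by ring

theorem rpow_inv_sub_mem_Icc {c X S : ℝ} (hc : 1 ≤ c) (hX : 0 ≤ X) (hS0 : 0 ≤ S)
    (hS : S ≤ 4 / 7 * X ^ c) : (X ^ c - S) ^ c⁻¹ ∈ Icc (3 / 7 * X) X := by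
  have hc0 : 0 < c := by linarith
  have hXc : 0 ≤ X ^ c := by positivity
  constructor
  · rw [le_rpow_inv_iff_of_pos (by positivity) (by linarith) hc0, mul_rpow (by norm_num) hX]
    have : (3 / 7 : ℝ) ^ c ≤ 3 / 7 := rpow_le_self_of_le_one (by norm_num) (by norm_num) hc
    nlinarith
  · rw [rpow_inv_le_iff_of_pos (by linarith) hX hc0]
    linarith

theorem volume_setOf_tail_mem_and_head_mem_Ioo {m : ℕ} {B : Set (Fin m → ℝ)}
    {f g : (Fin m → ℝ) → ℝ} (hf : Measurable f) (hg : Measurable g) (hB : MeasurableSet B) :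
    volume {t : Fin (m + 1) → ℝ |
        Fin.tail t ∈ B ∧ t 0 ∈ Ioo (f (Fin.tail t)) (g (Fin.tail t))} =
      ∫⁻ y in B, ENNReal.ofReal (g y - f y) := by
  set e := Prod.swap ∘ MeasurableEquiv.piFinSuccAbove (fun _ : Fin (m + 1) => ℝ) 0
  have he : MeasurePreserving e := (Measure.measurePreserving_swap (μ := (volume : Measure ℝ))
    (ν := (volume : Measure (Fin m → ℝ)))).comp (volume_preserving_piFinSuccAbove _ 0)
  have hpre : {t : Fin (m + 1) → ℝ |
      Fin.tail t ∈ B ∧ t 0 ∈ Ioo (f (Fin.tail t)) (g (Fin.tail t))} =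
      e ⁻¹' regionBetween f g B := by
    ext t
    simp [e, regionBetween]
  rw [hpre, he.measure_preimage (measurableSet_regionBetween hf hg hB).nullMeasurableSet]
  exact volume_regionBetween_eq_lintegral' hf hg hB

theorem measurableSet_setOf_tail_mem_and_head_mem_Ioo {m : ℕ} {B : Set (Fin m → ℝ)}
    {f g : (Fin m → ℝ) → ℝ} (hf : Measurable f) (hg : Measurable g) (hB : MeasurableSet B) :
    MeasurableSet {t : Fin (m + 1) → ℝ |
        Fin.tail t ∈ B ∧ t 0 ∈ Ioo (f (Fin.tail t)) (g (Fin.tail t))} := by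
  have htail : Measurable (Fin.tail : (Fin (m + 1) → ℝ) → Fin m → ℝ) := by fun_prop
  exact (htail hB).inter ((measurableSet_lt (hf.comp htail) (measurable_pi_apply 0)).inter
    (measurableSet_lt (measurable_pi_apply 0) (hg.comp htail)))

theorem measureReal_setOf_tail_mem_pi_Icc_and_head_mem_Ioo {m : ℕ} {a b δ : ℝ} (hab : a ≤ b)
    (hδ : 0 ≤ δ) {u : (Fin m → ℝ) → ℝ} (hu : Measurable u) :
    volume.real {t : Fin (m + 1) → ℝ | Fin.tail t ∈ univ.pi (fun _ => Icc a b) ∧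
        t 0 ∈ Ioo (u (Fin.tail t) - δ) (u (Fin.tail t))} = δ * (b - a) ^ m := by
  rw [measureReal_def, volume_setOf_tail_mem_and_head_mem_Ioo (hu.sub_const δ) hu
    (MeasurableSet.univ_pi fun _ => measurableSet_Icc)]
  simp only [sub_sub_cancel, setLIntegral_const, pi_univ_Icc, volume_Icc_pi, Finset.prod_const,
    Finset.card_univ, Fintype.card_fin, ENNReal.toReal_mul, ENNReal.toReal_pow,
    ENNReal.toReal_ofReal hδ, ENNReal.toReal_ofReal (sub_nonneg.2 hab)]

theorem measureReal_le_setIntegral {α : Type*} [MeasurableSpace α] {μ : Measure α}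
    {f : α → ℝ} {s t : Set α} (hst : s ⊆ t) (hs : MeasurableSet s) (hμt : μ t ≠ ⊤)
    (hf : IntegrableOn f t μ) (hf0 : 0 ≤ f) (hf1 : ∀ x ∈ s, 1 ≤ f x) :
    μ.real s ≤ ∫ x in t, f x ∂μ :=
  calc μ.real s ≤ ∫ x in s, f x ∂μ := by
        simpa using setIntegral_ge_of_const_le hs (ne_top_of_le_ne_top hμt (measure_mono hst))
          hf1 (hf.mono_set hst)
    _ ≤ ∫ x in t, f x ∂μ :=
        setIntegral_mono_set hf (Filter.Eventually.of_forall hf0) (Filter.Eventually.of_forall hst)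

theorem mul_pow_le_setIntegral_cube {c X δ : ℝ} (hc : 1 ≤ c) (hX : 0 < X) (hδ0 : 0 ≤ δ)
    (hδX : δ ≤ X / 4) {m : ℕ} (hm : m ≤ 4) {φ : ℝ → ℝ} (hφc : Continuous φ)
    (hφ0 : ∀ y, 0 ≤ φ y) (hφ1 : ∀ y, |y| ≤ c * X ^ (c - 1) * δ → φ y = 1) :
    δ * (X / 56) ^ m ≤
      ∫ t in univ.pi (fun _ : Fin (m + 1) => Icc (X / 8) X), φ ((∑ j, t j ^ c) - X ^ c) := by
  have hc0 : 0 < c := by linarith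
  set K := univ.pi fun _ : Fin m => Icc (X / 8) (X / 7)
  set u : (Fin m → ℝ) → ℝ := fun y => (X ^ c - ∑ j, y j ^ c) ^ c⁻¹
  set S := {t : Fin (m + 1) → ℝ |
    Fin.tail t ∈ K ∧ t 0 ∈ Ioo (u (Fin.tail t) - δ) (u (Fin.tail t))}
  have hu : ∀ y ∈ K, u y ^ c = X ^ c - ∑ j, y j ^ c ∧ u y ∈ Icc (3 / 7 * X) X := by
    intro y hy
    have hsum := sum_rpow_le_of_mem_Icc hm hc hX.le fun j =>
      ⟨by linarith [(hy j trivial).1], (hy j trivial).2⟩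
    have hsum0 : 0 ≤ ∑ j, y j ^ c :=
      Finset.sum_nonneg fun j _ => rpow_nonneg (by linarith [(hy j trivial).1]) c
    exact ⟨rpow_inv_rpow (by nlinarith [rpow_nonneg hX.le c]) hc0.ne',
      rpow_inv_sub_mem_Icc hc hX.le hsum0 hsum⟩
  have hu_meas : Measurable u := by fun_prop
  have hS : MeasurableSet S := measurableSet_setOf_tail_mem_and_head_mem_Ioo
    (hu_meas.sub_const δ) hu_meas (MeasurableSet.univ_pi fun _ => measurableSet_Icc)
  have hvolS : volume.real S = δ * (X / 56) ^ m := by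
    rw [measureReal_setOf_tail_mem_pi_Icc_and_head_mem_Ioo (by linarith) hδ0 hu_meas]
    ring
  have hSC : S ⊆ univ.pi fun _ : Fin (m + 1) => Icc (X / 8) X := by
    rintro t ⟨ht, ht0⟩ j -
    obtain ⟨-, hu_lo, hu_hi⟩ := hu _ ht
    refine Fin.cases ⟨by linarith [ht0.1], by linarith [ht0.2]⟩ (fun i => ?_) j
    exact ⟨(ht i trivial).1, (ht i trivial).2.trans (by linarith)⟩
  have hφS : ∀ t ∈ S, 1 ≤ φ ((∑ j, t j ^ c) - X ^ c) := by
    rintro t ⟨ht, ht0⟩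
    obtain ⟨hu_pow, hu_lo, hu_hi⟩ := hu _ ht
    have hdiff : (∑ j, t j ^ c) - X ^ c = t 0 ^ c - u (Fin.tail t) ^ c := by
      rw [Fin.sum_univ_succ, hu_pow]
      simp only [Fin.tail]
      ring
    refine (hφ1 _ ?_).ge
    rw [hdiff]
    exact abs_rpow_sub_rpow_le (by linarith [ht0.1]) ht0.2.le hu_hi (by linarith [ht0.1]) hc
  have hC := isCompact_univ_pi fun _ : Fin (m + 1) => isCompact_Icc (a := X / 8) (b := X)
  have hint := (by fun_prop (disch := linarith) : Continuous fun t : Fin (m + 1) → ℝ =>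
    φ ((∑ j, t j ^ c) - X ^ c)).continuousOn.integrableOn_compact (μ := volume) hC
  rw [← hvolS]
  exact measureReal_le_setIntegral hSC hS (hC.measure_lt_top (μ := volume)).ne hint
    (fun t => hφ0 _) hφS

theorem rpow_le_setIntegral_cube {c η X : ℝ} (hc : 1 ≤ c) (hη : 0 ≤ η) (hX : 1 ≤ X)
    {m : ℕ} (hm : m ≤ 4) {φ : ℝ → ℝ} (hφc : Continuous φ) (hφ0 : ∀ y, 0 ≤ φ y)
    (hφ1 : ∀ y, |y| ≤ X ^ (-(c * η)) / 4 → φ y = 1) :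
    X ^ ((↑(m + 1) : ℝ) - c - c * η) / (4 * c * 56 ^ m) ≤
      ∫ t in univ.pi (fun _ : Fin (m + 1) => Icc (X / 8) X), φ ((∑ j, t j ^ c) - X ^ c) := by
  have hc0 : 0 < c := by linarith
  set δ := X ^ (1 - c - c * η) / (4 * c) with hδ
  have hδX : δ ≤ X / 4 := by
    have : X ^ (1 - c - c * η) ≤ X := by
      simpa using rpow_le_rpow_of_exponent_le hX (by nlinarith : 1 - c - c * η ≤ 1)
    rw [div_le_div_iff₀ (by positivity) (by norm_num)]
    nlinarith
  have hthreshold : c * X ^ (c - 1) * δ = X ^ (-(c * η)) / 4 := by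
    rw [hδ, mul_div_assoc', mul_assoc, ← rpow_add (by linarith)]
    field_simp
    ring_nf
  have hsplit : X ^ ((↑(m + 1) : ℝ) - c - c * η) = X ^ (1 - c - c * η) * X ^ m := by
    rw [← rpow_natCast, ← rpow_add (by linarith)]
    push_cast
    ring_nf
  calc X ^ ((↑(m + 1) : ℝ) - c - c * η) / (4 * c * 56 ^ m) = δ * (X / 56) ^ m := by
        rw [hsplit, div_pow, hδ]
        field_simp
    _ ≤ _ := mul_pow_le_setIntegral_cube hc (by linarith) (by positivity) hδX hm hφc hφ0
        fun y hy => hφ1 y (hy.trans_eq hthreshold)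

theorem lemma21 (c : ℝ) (hc : 1 < c) (η : ℝ) (hη : 0 < η)
    (s : ℕ) (hs2 : 2 ≤ s) (hs5 : s ≤ 5) :
    ∃ c₀ > 0, ∃ R₀ : ℝ, ∀ R : ℝ, R₀ ≤ R →
    ∀ φ : ℝ → ℝ, Continuous φ → (∀ y, φ y ∈ Set.Icc (0:ℝ) 1) →
      (∀ y : ℝ, |y| ≤ 4/5 * R ^ (-η) → φ y = 1) →
    c₀ * (R ^ (1/c)) ^ ((s : ℝ) - c - c * η) ≤
      ∫ t in Set.univ.pi (fun _ : Fin s => Set.Icc (R ^ (1/c) / 8) (R ^ (1/c))),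
        φ ((∑ j, (t j) ^ c) - R) := by
  obtain ⟨m, rfl⟩ : ∃ m, s = m + 1 := ⟨s - 1, by omega⟩
  have hc0 : 0 < c := by linarith
  refine ⟨1 / (4 * c * 56 ^ m), by positivity, 1, fun R hR φ hφc hφ01 hφ1 => ?_⟩
  have hR0 : 0 ≤ R := by linarith
  have hXc : (R ^ (1 / c)) ^ c = R := by rw [one_div, rpow_inv_rpow hR0 hc0.ne']
  have hXη : (R ^ (1 / c)) ^ (-(c * η)) = R ^ (-η) := by
    rw [← rpow_mul hR0]
    field_simp
  have key := rpow_le_setIntegral_cube (X := R ^ (1 / c)) hc.le hη.le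
    (one_le_rpow hR (by positivity)) (by omega : m ≤ 4) hφc (fun y => (hφ01 y).1)
    fun y hy => hφ1 y <| hy.trans <| by
      rw [hXη]
      linarith [rpow_nonneg hR0 (-η)]
  rw [hXc] at key
  rwa [one_div_mul_eq_div]
end
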